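/- (Finite-breakpoint attainment of the dual supremum, correctness core of Algorithm 1) Assume R ≥ Σ_{x∈𝒳} min_{m∈ℳ_x} R_x(m). Let Λ ⊆ ℝ be the finite set consisting of 0 together with all nonnegative real numbers of the form (D_x(m) − D_x(m′))/(R_x(m′) − R_x(m)) over x ∈ 𝒳 and m, m′ ∈ ℳ_x with R_x(m) ≠ R_x(m′). Then sup_{λ ≥ 0} g(λ) = max_{λ ∈ Λ} g(λ); in particular the supremum of the dual objective over λ ≥ 0 is attained at a point of the finite set Λ. -/

import Mathlib

/-!
Fix `l ≥ 0` and a selection `σ` of minimisers at `l`. The affine function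
`t ↦ -t R + ∑ₓ (Dₓ(σ x) + t Rₓ(σ x))` agrees with `g` wherever `σ` still minimises, and a
minimiser can only be overtaken at a crossing point, so `σ` stays optimal up to the nearest
breakpoint on either side of `l`. Moving from `l` in the direction in which this affine function
does not decrease thus reaches a point of `Λ` where `g` is at least `g l`: to the left, `0 ∈ Λ`
stops the walk; to the right, a positive slope means `σ` pays more rate than the cheapest
selection somewhere (this is where `R ≥ ∑ₓ min Rₓ` enters), and the two cross beyond `l`.
-/

open Finset

lemma neg_div_mem_uIcc_of_nonneg_of_neg {α β l μ : ℝ} (hl : 0 ≤ α + l * β)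
    (hμ : α + μ * β < 0) : β ≠ 0 ∧ -α / β ∈ Set.uIcc l μ ∧ -α / β ≠ μ := by
  have hβ : β ≠ 0 := by rintro rfl; simp only [mul_zero, add_zero] at hl hμ; linarith
  have hfactor : ∀ t, α + t * β = β * (t - -α / β) := fun t => by field_simp; ring
  rw [hfactor] at hl hμ
  refine ⟨hβ, ?_, fun h => by simp [h] at hμ⟩
  rcases hβ.lt_or_gt with hneg | hpos
  · exact Set.mem_uIcc.2 <| .inl ⟨by nlinarith, by nlinarith⟩
  · exact Set.mem_uIcc.2 <| .inr ⟨by nlinarith, by nlinarith⟩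

section

variable {X : Type*} {M : X → Type*}

def breakpoints (D Rf : (x : X) → M x → ℝ) : Set ℝ :=
  { l : ℝ | 0 ≤ l ∧ ∃ x : X, ∃ m m' : M x,
    Rf x m ≠ Rf x m' ∧ l = (D x m - D x m') / (Rf x m' - Rf x m) }

def SelectionMinimizesAt (D Rf : (x : X) → M x → ℝ) (σ : (x : X) → M x) (l : ℝ) : Prop :=
  ∀ x m, D x (σ x) + l * Rf x (σ x) ≤ D x m + l * Rf x m

def selectionObjective [Fintype X] (D Rf : (x : X) → M x → ℝ) (σ : (x : X) → M x)
    (R l : ℝ) : ℝ :=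
  -l * R + ∑ x, (D x (σ x) + l * Rf x (σ x))

def dualObjective [Fintype X] [∀ x, Fintype (M x)] [∀ x, Nonempty (M x)]
    (D Rf : (x : X) → M x → ℝ) (R l : ℝ) : ℝ :=
  -l * R + ∑ x, univ.inf' univ_nonempty (fun m => D x m + l * Rf x m)

variable {D Rf : (x : X) → M x → ℝ}

lemma breakpoints_finite [Finite X] [∀ x, Finite (M x)] : (breakpoints D Rf).Finite := by
  refine (Set.finite_range fun p : Σ x, M x × M x =>
    (D p.1 p.2.1 - D p.1 p.2.2) / (Rf p.1 p.2.2 - Rf p.1 p.2.1)).subset ?_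
  rintro l ⟨-, x, m, m', -, rfl⟩
  exact ⟨⟨x, m, m'⟩, rfl⟩

lemma exists_mem_breakpoints_of_not_minimizes {σ : (x : X) → M x} {l μ : ℝ}
    (hl : 0 ≤ l) (hμ : 0 ≤ μ) (hσ : SelectionMinimizesAt D Rf σ l)
    (hσμ : ¬ SelectionMinimizesAt D Rf σ μ) :
    ∃ c ∈ breakpoints D Rf, c ∈ Set.uIcc l μ ∧ c ≠ μ := by
  simp only [SelectionMinimizesAt, not_forall, not_le] at hσμ
  obtain ⟨x, m, hm⟩ := hσμ
  obtain ⟨hne, hc, hcμ⟩ := neg_div_mem_uIcc_of_nonneg_of_neg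
    (α := D x m - D x (σ x)) (β := Rf x m - Rf x (σ x)) (l := l) (μ := μ)
    (by linarith [hσ x m]) (by linarith)
  refine ⟨_, ⟨(le_min hl hμ).trans hc.1, x, σ x, m, fun h => hne (by rw [h, sub_self]), ?_⟩,
    hc, hcμ⟩
  rw [neg_sub]

lemma exists_selectionMinimizesAt [∀ x, Fintype (M x)] [∀ x, Nonempty (M x)] (l : ℝ) :
    ∃ σ, SelectionMinimizesAt D Rf σ l := by
  choose σ _ hσ using fun x => exists_min_image univ (fun m => D x m + l * Rf x m) univ_nonempty
  exact ⟨σ, fun x m => hσ x m (mem_univ m)⟩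

variable [Fintype X]

lemma selectionObjective_sub (σ : (x : X) → M x) (R t u : ℝ) :
    selectionObjective D Rf σ R u - selectionObjective D Rf σ R t =
      (u - t) * (∑ x, Rf x (σ x) - R) := by
  simp only [selectionObjective, sum_add_distrib, ← mul_sum]
  ring

variable [∀ x, Fintype (M x)] [∀ x, Nonempty (M x)]

lemma dualObjective_eq_selectionObjective {σ : (x : X) → M x} {l : ℝ}
    (hσ : SelectionMinimizesAt D Rf σ l) (R : ℝ) :
    dualObjective D Rf R l = selectionObjective D Rf σ R l := by
  unfold dualObjective selectionObjective
  congr 1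
  refine sum_congr rfl fun x _ => le_antisymm (inf'_le _ (mem_univ _)) ?_
  exact le_inf' _ _ fun m _ => hσ x m

lemma exists_mem_breakpoints_ge {σ : (x : X) → M x} {l R : ℝ} (hl : 0 ≤ l)
    (hR : R ≥ ∑ x, univ.inf' univ_nonempty (Rf x)) (hσ : SelectionMinimizesAt D Rf σ l)
    (hslope : R < ∑ x, Rf x (σ x)) : ∃ c ∈ breakpoints D Rf, l ≤ c := by
  obtain ⟨x, -, hx⟩ := exists_lt_of_sum_lt (hR.trans_lt hslope)
  obtain ⟨m, -, hm⟩ := exists_mem_eq_inf' univ_nonempty (Rf x)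
  rw [hm] at hx
  have hc : l ≤ (D x (σ x) - D x m) / (Rf x m - Rf x (σ x)) := by
    rw [le_div_iff_of_neg (by linarith)]
    linarith [hσ x m]
  exact ⟨_, ⟨hl.trans hc, x, σ x, m, hx.ne', rfl⟩, hc⟩

lemma dualObjective_le_of_no_breakpoints_between {σ : (x : X) → M x} {R l μ : ℝ}
    (hl : 0 ≤ l) (hμ : 0 ≤ μ) (hσ : SelectionMinimizesAt D Rf σ l)
    (hgap : ∀ c ∈ breakpoints D Rf, c ∈ Set.uIcc l μ → c = μ)
    (hdir : 0 ≤ (μ - l) * (∑ x, Rf x (σ x) - R)) :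
    dualObjective D Rf R l ≤ dualObjective D Rf R μ := by
  have hσμ : SelectionMinimizesAt D Rf σ μ := by
    by_contra h
    obtain ⟨c, hc, hcI, hcμ⟩ := exists_mem_breakpoints_of_not_minimizes hl hμ hσ h
    exact hcμ (hgap c hc hcI)
  rw [dualObjective_eq_selectionObjective hσ, dualObjective_eq_selectionObjective hσμ]
  linarith [selectionObjective_sub (D := D) (Rf := Rf) σ R l μ]

lemma exists_mem_breakpoints_dualObjective_le {R l : ℝ}
    (hR : R ≥ ∑ x, univ.inf' univ_nonempty (Rf x)) (hl : 0 ≤ l) :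
    ∃ μ ∈ {0} ∪ breakpoints D Rf, dualObjective D Rf R l ≤ dualObjective D Rf R μ := by
  obtain ⟨σ, hσ⟩ := exists_selectionMinimizesAt (D := D) (Rf := Rf) l
  rcases le_or_gt (∑ x, Rf x (σ x)) R with hslope | hslope
  · obtain ⟨μ, ⟨hμΛ, hμ0, hμl⟩, hμmax⟩ := Set.exists_max_image
      (({0} ∪ breakpoints D Rf) ∩ Set.Icc 0 l) id
      (((Set.finite_singleton 0).union breakpoints_finite).inter_of_left _)
      ⟨0, .inl rfl, le_rfl, hl⟩
    refine ⟨μ, hμΛ, dualObjective_le_of_no_breakpoints_between hl hμ0 hσ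
      (fun c hc hcI => ?_) (mul_nonneg_of_nonpos_of_nonpos (by linarith) (by linarith))⟩
    rw [Set.uIcc_of_ge hμl] at hcI
    exact le_antisymm (hμmax c ⟨.inr hc, hμ0.trans hcI.1, hcI.2⟩) hcI.1
  · obtain ⟨μ, ⟨hμΛ, hlμ⟩, hμmin⟩ := Set.exists_min_image
      (breakpoints D Rf ∩ Set.Ici l) id (breakpoints_finite.inter_of_left _)
      (exists_mem_breakpoints_ge hl hR hσ hslope)
    refine ⟨μ, .inr hμΛ, dualObjective_le_of_no_breakpoints_between hl (hl.trans hlμ) hσ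
      (fun c hc hcI => ?_) (mul_nonneg (sub_nonneg.2 hlμ) (by linarith))⟩
    rw [Set.uIcc_of_le hlμ] at hcI
    exact le_antisymm hcI.2 (hμmin c ⟨hc, hcI.1⟩)

end

theorem dual_sup_attained_on_breakpoints_general
    (X : Type) [Fintype X]
    (M : X → Type) [∀ x, Fintype (M x)] [∀ x, Nonempty (M x)]
    (D Rf : (x : X) → M x → ℝ)
    (R : ℝ)
    (hR : R ≥ ∑ x, Finset.univ.inf' Finset.univ_nonempty (Rf x))
    (g : ℝ → ℝ)
    (hg : ∀ l, g l = -l * R + ∑ x, Finset.univ.inf' Finset.univ_nonempty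
        (fun m => D x m + l * Rf x m))
    (Λ : Set ℝ)
    (hΛ : Λ = {0} ∪ { l : ℝ | 0 ≤ l ∧ ∃ x : X, ∃ m m' : M x,
        Rf x m ≠ Rf x m' ∧ l = (D x m - D x m') / (Rf x m' - Rf x m) }) :
    ∃ l₀ ∈ Λ, (∀ l ∈ Λ, g l ≤ g l₀) ∧
      sSup { v : ℝ | ∃ l : ℝ, 0 ≤ l ∧ v = g l } = g l₀ := by
  obtain rfl : g = dualObjective D Rf R := funext hg
  obtain rfl : Λ = {0} ∪ breakpoints D Rf := hΛ
  obtain ⟨l₀, hl₀, hmax⟩ := Set.exists_max_image _ (dualObjective D Rf R)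
    ((Set.finite_singleton 0).union (breakpoints_finite (D := D) (Rf := Rf))) ⟨0, .inl rfl⟩
  have hl₀_nonneg : 0 ≤ l₀ := hl₀.elim (fun h => (Set.mem_singleton_iff.1 h).ge) (·.1)
  refine ⟨l₀, hl₀, hmax, IsGreatest.csSup_eq ⟨⟨l₀, hl₀_nonneg, rfl⟩, ?_⟩⟩
  rintro _ ⟨l, hl, rfl⟩
  obtain ⟨μ, hμ, hle⟩ := exists_mem_breakpoints_dualObjective_le hR hl
  exact hle.trans (hmax μ hμ)

/-- Finite-breakpoint attainment of the dual supremum (correctness core of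
Algorithm 1): for feasible rate `R`, the supremum over `λ ≥ 0` of the dual
objective `g` is attained at a point of the finite set `Λ` consisting of `0`
together with all nonnegative slopes `(D_x(m) - D_x(m'))/(R_x(m') - R_x(m))`,
and equals the maximum of `g` over `Λ`. -/
theorem dual_sup_attained_on_breakpoints
    (X : Type) [Fintype X] [Nonempty X]
    (M : X → Type) [∀ x, Fintype (M x)] [∀ x, Nonempty (M x)]
    (D Rf : (x : X) → M x → ℝ)
    (hD : ∀ x m, 0 ≤ D x m) (hRf : ∀ x m, 0 ≤ Rf x m)
    (R : ℝ)
    (hR : R ≥ ∑ x, Finset.univ.inf' Finset.univ_nonempty (Rf x))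
    (g : ℝ → ℝ)
    (hg : ∀ l, g l = -l * R + ∑ x, Finset.univ.inf' Finset.univ_nonempty
        (fun m => D x m + l * Rf x m))
    (Λ : Set ℝ)
    (hΛ : Λ = {0} ∪ { l : ℝ | 0 ≤ l ∧ ∃ x : X, ∃ m m' : M x,
        Rf x m ≠ Rf x m' ∧ l = (D x m - D x m') / (Rf x m' - Rf x m) }) :
    ∃ l₀ ∈ Λ, (∀ l ∈ Λ, g l ≤ g l₀) ∧
      sSup { v : ℝ | ∃ l : ℝ, 0 ≤ l ∧ v = g l } = g l₀ :=
  dual_sup_attained_on_breakpoints_general X M D Rf R hR g hg Λ hΛ
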